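/- Let H be a Borel probability measure on ℝ and ν > 0. For x ∈ ℝ write f(x) = f_{H,ν}(x) = ∫ φ((x−τ)/ν) ν⁻¹ dH(τ) and S(x) = ∫ ((x−τ)/ν)² φ((x−τ)/ν) ν⁻¹ dH(τ), so that S(x)/f(x) is the posterior second moment of (x−τ)/ν and equals ν² f''(x)/f(x) + 1. Then for every x ∈ ℝ and every ρ ∈ (0, e⁻¹/√(2π)): (S(x)/f(x)) · ( ν f(x) / ((ν f(x)) ∨ ρ) ) ≤ log(1/(2πρ²)). -/

import Mathlib

open MeasureTheory

/-- The standard normal density `φ(t) = (2π)^{-1/2} exp(−t²/2)`. -/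
noncomputable def gaussPdf (t : ℝ) : ℝ := (Real.sqrt (2 * Real.pi))⁻¹ * Real.exp (-(t ^ 2) / 2)

/-- The Gaussian mixture density `f_{H,ν}(x) = ∫ φ((x−τ)/ν) ν⁻¹ dH(τ)`. -/
noncomputable def mixDens (H : Measure ℝ) (ν x : ℝ) : ℝ :=
  ∫ τ, gaussPdf ((x - τ) / ν) * ν⁻¹ ∂H

/-!
Write `ℓ(p) = log(1/(2πp²)) = φ₊(p)²`, so that `ℓ(φ(t)) = t²`. With `u = (x−τ)/ν`, the integrand of
`νS(x)` is `u² φ(u) = g(φ(u))` for the concave function `g(p) = p ℓ(p)`. Bounding `g` by its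
tangent line at `M = νf(x) ∨ ρ` and integrating against `H` gives
`νS(x) ≤ 2M + (ℓ(M) − 2) νf(x)`, which is at most `ℓ(ρ) M`: when `M = νf(x)` because `ℓ` is
decreasing, and when `M = ρ` because `ℓ(ρ) ≥ 2` for `ρ ≤ e⁻¹/√(2π)`.
-/

lemma gaussPdf_pos (t : ℝ) : 0 < gaussPdf t := by
  unfold gaussPdf
  positivity

lemma gaussPdf_le (t : ℝ) : gaussPdf t ≤ (Real.sqrt (2 * Real.pi))⁻¹ :=
  mul_le_of_le_one_right (by positivity) (Real.exp_le_one_iff.2 (by nlinarith [sq_nonneg t]))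

lemma continuous_gaussPdf : Continuous gaussPdf := by
  unfold gaussPdf
  fun_prop

/-- The function `ℓ = φ₊²`. -/
noncomputable def gaussPdfInvSq (ρ : ℝ) : ℝ := Real.log (1 / (2 * Real.pi * ρ ^ 2))

lemma gaussPdfInvSq_eq {ρ : ℝ} (hρ : 0 < ρ) :
    gaussPdfInvSq ρ = -Real.log (2 * Real.pi) - 2 * Real.log ρ := by
  rw [gaussPdfInvSq, one_div, Real.log_inv, Real.log_mul (by positivity) (by positivity),
    Real.log_pow]
  push_cast
  ring

lemma gaussPdfInvSq_le_of_le {ρ p : ℝ} (hρ : 0 < ρ) (hρp : ρ ≤ p) :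
    gaussPdfInvSq p ≤ gaussPdfInvSq ρ := by
  rw [gaussPdfInvSq_eq hρ, gaussPdfInvSq_eq (hρ.trans_le hρp)]
  linarith [Real.log_le_log hρ hρp]

lemma two_le_gaussPdfInvSq {ρ : ℝ} (hρ : 0 < ρ)
    (hρ_le : ρ ≤ (Real.exp 1)⁻¹ / Real.sqrt (2 * Real.pi)) : 2 ≤ gaussPdfInvSq ρ := by
  have h2π : 0 < 2 * Real.pi := by positivity
  have hsq : 2 * Real.pi * ρ ^ 2 ≤ Real.exp (-2) := by
    have h := pow_le_pow_left₀ (by positivity) ((le_div_iff₀ (Real.sqrt_pos.2 h2π)).1 hρ_le) 2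
    rw [mul_pow, Real.sq_sqrt h2π.le, ← Real.exp_neg, ← Real.exp_nat_mul] at h
    norm_num at h
    linarith
  have hlog := Real.log_le_log (by positivity) hsq
  rw [Real.log_exp] at hlog
  rw [gaussPdfInvSq, one_div, Real.log_inv]
  linarith

lemma gaussPdfInvSq_gaussPdf (t : ℝ) : gaussPdfInvSq (gaussPdf t) = t ^ 2 := by
  rw [gaussPdfInvSq, gaussPdf, mul_pow, inv_pow, Real.sq_sqrt (by positivity), ← Real.exp_nat_mul,
    mul_inv_cancel_left₀ (by positivity), one_div, Real.log_inv, Real.log_exp]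
  ring

/-- The tangent line of the concave map `p ↦ p ℓ(p)` at `M` lies above it. -/
lemma mul_gaussPdfInvSq_le {p M : ℝ} (hp : 0 < p) (hM : 0 < M) :
    p * gaussPdfInvSq p ≤ 2 * M + (gaussPdfInvSq M - 2) * p := by
  have hlog : p * Real.log (M / p) ≤ M - p := by
    have := mul_le_mul_of_nonneg_left (Real.log_le_sub_one_of_pos (div_pos hM hp)) hp.le
    rwa [mul_sub, mul_div_cancel₀ _ hp.ne', mul_one] at this
  rw [gaussPdfInvSq_eq hp, gaussPdfInvSq_eq hM]
  rw [Real.log_div hM.ne' hp.ne'] at hlog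
  linarith

lemma add_mul_gaussPdfInvSq_max_le {F ρ : ℝ} (hF : 0 < F) (hρ : 0 < ρ)
    (hρ_two : 2 ≤ gaussPdfInvSq ρ) :
    2 * (F ⊔ ρ) + (gaussPdfInvSq (F ⊔ ρ) - 2) * F ≤ gaussPdfInvSq ρ * (F ⊔ ρ) := by
  rcases le_total ρ F with hρF | hFρ
  · rw [sup_eq_left.2 hρF]
    nlinarith [gaussPdfInvSq_le_of_le hρ hρF]
  · rw [sup_eq_right.2 hFρ]
    nlinarith

section Mixture

variable {α : Type*} [MeasurableSpace α] {μ : Measure α} {u : α → ℝ}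

lemma integrable_gaussPdf_comp [IsFiniteMeasure μ] (hu : AEStronglyMeasurable u μ) :
    Integrable (fun a ↦ gaussPdf (u a)) μ :=
  Integrable.mono' (integrable_const _) (continuous_gaussPdf.comp_aestronglyMeasurable hu)
    (ae_of_all _ fun a ↦ by
      rw [Real.norm_of_nonneg (gaussPdf_pos _).le]
      exact gaussPdf_le _)

lemma integral_gaussPdf_comp_pos [IsFiniteMeasure μ] [NeZero μ] (hu : AEStronglyMeasurable u μ) :
    0 < ∫ a, gaussPdf (u a) ∂μ := by
  rw [integral_pos_iff_support_of_nonneg (fun a ↦ (gaussPdf_pos _).le)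
    (integrable_gaussPdf_comp hu), Function.support_eq_univ fun a ↦ (gaussPdf_pos _).ne']
  simpa using NeZero.ne μ

lemma integral_sq_mul_gaussPdf_le [IsProbabilityMeasure μ] (hu : AEStronglyMeasurable u μ)
    {M : ℝ} (hM : 0 < M) :
    ∫ a, u a ^ 2 * gaussPdf (u a) ∂μ ≤
      2 * M + (gaussPdfInvSq M - 2) * ∫ a, gaussPdf (u a) ∂μ := by
  have hint := integrable_gaussPdf_comp hu
  calc ∫ a, u a ^ 2 * gaussPdf (u a) ∂μ
      ≤ ∫ a, (2 * M + (gaussPdfInvSq M - 2) * gaussPdf (u a)) ∂μ := by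
        refine integral_mono_of_nonneg
          (ae_of_all _ fun a ↦ mul_nonneg (sq_nonneg _) (gaussPdf_pos _).le)
          ((integrable_const _).add (hint.const_mul _)) (ae_of_all _ fun a ↦ ?_)
        simpa only [← gaussPdfInvSq_gaussPdf (u a), mul_comm (gaussPdfInvSq _)]
          using mul_gaussPdfInvSq_le (gaussPdf_pos (u a)) hM
    _ = 2 * M + (gaussPdfInvSq M - 2) * ∫ a, gaussPdf (u a) ∂μ := by
        rw [integral_add (integrable_const _) (hint.const_mul _), integral_const,
          integral_const_mul, probReal_univ, one_smul]

end Mixture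

/-- Jiang–Zhang second-moment bound: with `f = f_{H,ν}` and
`S(x) = ∫ ((x−τ)/ν)² φ((x−τ)/ν) ν⁻¹ dH(τ)` (so `S/f` is the posterior second moment of
`(x−τ)/ν`), for every `x` and every `ρ ∈ (0, e⁻¹/√(2π))`,
`(S(x)/f(x)) · (ν f(x) / ((ν f(x)) ∨ ρ)) ≤ log(1/(2πρ²))`. -/
theorem truncated_posterior_second_moment_bound
    (H : Measure ℝ) [IsProbabilityMeasure H] (ν : ℝ) (hν : 0 < ν)
    (x : ℝ) (ρ : ℝ)
    (hρ : ρ ∈ Set.Ioo (0:ℝ) ((Real.exp 1)⁻¹ / Real.sqrt (2 * Real.pi))) :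
    (∫ τ, ((x - τ) / ν) ^ 2 * gaussPdf ((x - τ) / ν) * ν⁻¹ ∂H) / mixDens H ν x
        * ((ν * mixDens H ν x) / ((ν * mixDens H ν x) ⊔ ρ))
      ≤ Real.log (1 / (2 * Real.pi * ρ ^ 2)) := by
  have hu : AEStronglyMeasurable (fun τ ↦ (x - τ) / ν) H := by fun_prop
  set F := ∫ τ, gaussPdf ((x - τ) / ν) ∂H
  set S := ∫ τ, ((x - τ) / ν) ^ 2 * gaussPdf ((x - τ) / ν) ∂H
  have hF : 0 < F := integral_gaussPdf_comp_pos hu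
  have hM : 0 < F ⊔ ρ := lt_sup_of_lt_right hρ.1
  have hS : S ≤ gaussPdfInvSq ρ * (F ⊔ ρ) :=
    (integral_sq_mul_gaussPdf_le hu hM).trans
      (add_mul_gaussPdfInvSq_max_le hF hρ.1 (two_le_gaussPdfInvSq hρ.1 hρ.2.le))
  have hνf : ν * mixDens H ν x = F := by
    rw [mixDens, integral_mul_const, mul_comm, inv_mul_cancel_right₀ hν.ne']
  rw [hνf, integral_mul_const, mixDens, integral_mul_const,
    mul_div_mul_right _ _ (inv_ne_zero hν.ne'), div_mul_div_cancel₀ hF.ne', div_le_iff₀ hM]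
  exact hS
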